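/- arXiv:1410.5989 — 2 statements merged into one kernel-verified Lean document; each statement's English description precedes it below -/
import Mathlib

section
/- Let G be a finite metahamiltonian p-group and x ∈ G. If the normal closure K of ⟨x⟩ in G is non-abelian, then the derived subgroup of K has order p. -/
/-!
Since `K` is not abelian, two conjugates `a`, `b` of `x` do not commute. A non-abelian subgroup
of `K` containing a conjugate of `x` is normal in `G`, hence contains `x` and equals `K`. So
`K = ⟨a, b⟩`, and maximal subgroups `A ∋ a`, `B ∋ b` of `K` are abelian. The commutator
`c = ⁅a, b⁆` lies in `A ∩ B`, so it is centralized by `A ⊔ B = K`; hence `K' = ⟨c⟩`, and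
`c ^ p = ⁅a ^ p, b⁆ = 1` because `a ^ p ∈ B`.
-/

open Subgroup
open scoped commutatorElement

section

variable {G : Type*} [Group G]

theorem commutatorElement_pow_left {a b : G} (h : Commute a ⁅a, b⁆) (n : ℕ) :
    ⁅a ^ n, b⁆ = ⁅a, b⁆ ^ n := by
  induction n with
  | zero => simp
  | succ n ih =>
    rw [pow_succ', commutatorElement_mul_left_eq_conj_mul, ih, (h.pow_right n).eq,
      mul_inv_cancel_right, pow_succ]

theorem IsPGroup.index_eq_of_isCoatom [Finite G] {p : ℕ} [hp : Fact p.Prime]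
    (hG : IsPGroup p G) {H : Subgroup G} (hH : IsCoatom H) : H.index = p := by
  obtain ⟨n, hn⟩ := (hG.to_subgroup H).exists_card_eq
  obtain ⟨m, hm⟩ := hG.exists_card_eq
  have hnm : n < m := by
    have hcard := H.card_mul_index
    rw [hn, hm] at hcard
    refine (Nat.pow_lt_pow_iff_right hp.out.one_lt).mp ?_
    rw [← hcard]
    exact lt_mul_right (pow_pos hp.out.pos n) (H.one_lt_index_of_ne_top hH.1)
  -- Sylow's theorem gives a subgroup of order `p * |H|` above `H`, which must be `G`.
  obtain ⟨L, hL, hHL⟩ := Sylow.exists_subgroup_card_pow_succ (hm ▸ pow_dvd_pow p hnm) hn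
  have hLH : L ≠ H := by
    rintro rfl
    exact n.succ_ne_self (Nat.pow_right_injective hp.out.two_le (hn.symm.trans hL)).symm
  have hcard : Nat.card H * H.index = Nat.card H * p := by
    rw [H.card_mul_index, ← card_top, ← (hH.le_iff.mp hHL).resolve_right hLH, hL, hn, pow_succ]
  exact Nat.eq_of_mul_eq_mul_left Nat.card_pos hcard

theorem IsPGroup.normal_of_isCoatom [Finite G] {p : ℕ} [Fact p.Prime] (hG : IsPGroup p G)
    {H : Subgroup G} (hH : IsCoatom H) : H.Normal :=
  have := hG.isNilpotent
  Group.normalizerCondition_of_isNilpotent.normal_of_coatom H hH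

theorem IsPGroup.pow_mem_of_isCoatom [Finite G] {p : ℕ} [Fact p.Prime] (hG : IsPGroup p G)
    {H : Subgroup G} (hH : IsCoatom H) (g : G) : g ^ p ∈ H := by
  have := hG.normal_of_isCoatom hH
  simpa only [hG.index_eq_of_isCoatom hH] using H.pow_index_mem g

theorem exists_isCoatom_mem_of_not_commute [Finite G] {a b : G} (h : ¬Commute a b) :
    ∃ A : Subgroup G, IsCoatom A ∧ a ∈ A := by
  obtain htop | ⟨A, hA, hle⟩ := IsCoatomic.eq_top_or_exists_le_coatom (zpowers a)
  · obtain ⟨k, rfl⟩ := mem_zpowers_iff.mp (htop ▸ mem_top b)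
    exact absurd ((Commute.refl a).zpow_right k) h
  · exact ⟨A, hA, hle (mem_zpowers a)⟩

theorem Subgroup.mem_center_of_mem_sup_eq_top {A B : Subgroup G} [IsMulCommutative A]
    [IsMulCommutative B] (hAB : A ⊔ B = ⊤) {c : G} (hA : c ∈ A) (hB : c ∈ B) :
    c ∈ center G := by
  have hle : A ⊔ B ≤ centralizer {c} :=
    sup_le ((le_centralizer A).trans (centralizer_le (Set.singleton_subset_iff.2 hA)))
      ((le_centralizer B).trans (centralizer_le (Set.singleton_subset_iff.2 hB)))
  rw [mem_center_iff]
  intro g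
  exact mem_centralizer_singleton_iff.mp (hle (hAB ▸ mem_top g))

theorem commutator_eq_zpowers_of_closure_pair_eq_top {a b : G} (hab : closure {a, b} = ⊤)
    (hc : ⁅a, b⁆ ∈ center G) : commutator G = zpowers ⁅a, b⁆ := by
  set N := zpowers ⁅a, b⁆
  have : N.Normal :=
    ⟨fun n hn g => by rwa [mem_center_iff.mp (zpowers_le.mpr hc hn) g, mul_inv_cancel_right]⟩
  refine le_antisymm ?_ (zpowers_le.mpr (commutator_mem_commutator (mem_top a) (mem_top b)))
  set f := QuotientGroup.mk' N
  have hQ : closure {f a, f b} = ⊤ := by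
    rw [← Set.image_pair, ← MonoidHom.map_closure, hab,
      map_top_of_surjective _ (QuotientGroup.mk'_surjective N)]
  have hfab : f a * f b = f b * f a := by
    rw [← commutatorElement_eq_one_iff_mul_comm, ← map_commutatorElement,
      QuotientGroup.mk'_apply, QuotientGroup.eq_one_iff]
    exact mem_zpowers _
  have hcomm : IsMulCommutative (closure {f a, f b}) := isMulCommutative_closure <| by
    rintro _ (rfl | rfl) _ (rfl | rfl) <;> first | rfl | exact hfab | exact hfab.symm
  rw [← QuotientGroup.ker_mk' N, ← Subgroup.map_eq_bot_iff, commutator_def, map_commutator,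
    map_top_of_surjective _ (QuotientGroup.mk'_surjective N), commutator_self_eq_bot_iff, ← hQ]
  exact hcomm

theorem IsPGroup.card_commutator_eq_of_closure_pair_eq_top [Finite G] {p : ℕ} [Fact p.Prime]
    (hG : IsPGroup p G) {a b : G} (hab : closure {a, b} = ⊤) (hne : ¬Commute a b)
    (ha : ∀ H : Subgroup G, IsCoatom H → a ∈ H → IsMulCommutative H)
    (hb : ∀ H : Subgroup G, IsCoatom H → b ∈ H → IsMulCommutative H) :
    Nat.card (commutator G) = p := by
  obtain ⟨A, hA, haA⟩ := exists_isCoatom_mem_of_not_commute hne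
  obtain ⟨B, hB, hbB⟩ := exists_isCoatom_mem_of_not_commute fun h => hne h.symm
  have := ha A hA haA
  have := hb B hB hbB
  have := hG.normal_of_isCoatom hA
  have := hG.normal_of_isCoatom hB
  have hAB : A ≠ B := by
    rintro rfl
    exact hne (setLike_mul_comm haA hbB)
  have hcAB : ⁅a, b⁆ ∈ A ⊓ B := commutator_le_inf A B (commutator_mem_commutator haA hbB)
  have hcZ : ⁅a, b⁆ ∈ center G :=
    mem_center_of_mem_sup_eq_top (hA.sup_eq_top_of_ne hB hAB) hcAB.1 hcAB.2
  have hcp : ⁅a, b⁆ ^ p = 1 := by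
    rw [← commutatorElement_pow_left (mem_center_iff.mp hcZ a),
      commutatorElement_eq_one_iff_commute]
    exact setLike_mul_comm (hG.pow_mem_of_isCoatom hB a) hbB
  rw [commutator_eq_zpowers_of_closure_pair_eq_top hab hcZ, Nat.card_zpowers,
    orderOf_eq_prime hcp (mt commutatorElement_eq_one_iff_commute.mp hne)]

theorem Subgroup.normalClosure_singleton_le_of_isConj {N : Subgroup G} [N.Normal] {x y : G}
    (hxy : IsConj x y) (hy : y ∈ N) : normalClosure {x} ≤ N :=
  normalClosure_le_normal <| Set.singleton_subset_iff.2 <|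
    Group.conjugatesOfSet_subset (Set.singleton_subset_iff.2 hy)
      (Group.mem_conjugatesOfSet_iff.2 ⟨y, rfl, hxy.symm⟩)

theorem isMulCommutative_of_ne_top_of_isConj
    (hmh : ∀ H : Subgroup G, ¬IsMulCommutative H → H.Normal) {x y : G} (hxy : IsConj x y)
    {H : Subgroup (normalClosure {x})} (hH : H ≠ ⊤)
    (hy : y ∈ H.map (normalClosure {x}).subtype) : IsMulCommutative H := by
  by_contra hnc
  have hinj := (normalClosure ({x} : Set G)).subtype_injective
  have hnc' : ¬IsMulCommutative (H.map (normalClosure {x}).subtype) := by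
    intro _
    have := (H.map (normalClosure {x}).subtype).comap_injective_isMulCommutative hinj
    rw [comap_map_eq_self_of_injective hinj] at this
    exact hnc this
  have := hmh _ hnc'
  refine hH (map_injective hinj ?_)
  rw [← MonoidHom.range_eq_map, range_subtype]
  exact (map_subtype_le H).antisymm (normalClosure_singleton_le_of_isConj hxy hy)

end

/-- In a finite metahamiltonian p-group, if the normal closure K of ⟨x⟩ is
non-abelian, then |K'| = p. -/
theorem normalClosure_derived_order_p {p : ℕ} (hp : p.Prime)
    (G : Type*) [Group G] [Finite G] (hG : IsPGroup p G)
    (hmh : ∀ H : Subgroup G, ¬IsMulCommutative ↥H → H.Normal) (x : G)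
    (hK : ¬IsMulCommutative ↥(Subgroup.normalClosure ({x} : Set G))) :
    Nat.card (↥⁅Subgroup.normalClosure ({x} : Set G), Subgroup.normalClosure ({x} : Set G)⁆) = p := by
  have : Fact p.Prime := ⟨hp⟩
  set K := normalClosure ({x} : Set G)
  obtain ⟨a, ha, b, hb, hab⟩ :
      ∃ a ∈ Group.conjugatesOfSet {x}, ∃ b ∈ Group.conjugatesOfSet {x}, ¬Commute a b := by
    by_contra! h
    exact hK (isMulCommutative_closure h)
  have hxa : IsConj x a := by simpa using Group.mem_conjugatesOfSet_iff.mp ha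
  have hxb : IsConj x b := by simpa using Group.mem_conjugatesOfSet_iff.mp hb
  let a' : K := ⟨a, conjugatesOfSet_subset_normalClosure ha⟩
  let b' : K := ⟨b, conjugatesOfSet_subset_normalClosure hb⟩
  have hab' : ¬Commute a' b' := fun h => hab (congrArg Subtype.val h)
  have hgen : closure {a', b'} = ⊤ := by
    by_contra hne
    have ha' : a' ∈ closure {a', b'} := subset_closure (Set.mem_insert _ _)
    have hb' : b' ∈ closure {a', b'} := subset_closure (Set.mem_insert_of_mem _ rfl)
    have := isMulCommutative_of_ne_top_of_isConj hmh hxa hne ⟨a', ha', rfl⟩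
    exact hab' (setLike_mul_comm ha' hb')
  rw [← map_subtype_commutator, card_subtype]
  exact (hG.to_subgroup K).card_commutator_eq_of_closure_pair_eq_top hgen hab'
    (fun H hH ha' => isMulCommutative_of_ne_top_of_isConj hmh hxa hH.1 ⟨a', ha', rfl⟩)
    (fun H hH hb' => isMulCommutative_of_ne_top_of_isConj hmh hxb hH.1 ⟨b', hb', rfl⟩)
end

section
/- A finite p-group G is minimal non-abelian if and only if d(G) = 2 and Z(G) = Φ(G). -/
/-!
If every proper subgroup is abelian, two non-commuting elements generate `G`; a central `z`
outside a maximal subgroup `M` would make `G = ⟨M, z⟩` abelian, so `Z(G) ≤ Φ(G)`; and for each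
`g`, the subgroup `⟨g⟩Φ(G)` is proper because `Φ(G)` is non-generating, hence abelian, so
`Φ(G) ≤ Z(G)`.

Conversely, maximal subgroups of a `p`-group are normal of index `p`, so `G/Φ(G)` is abelian of
exponent `p`. If `Z(G) = Φ(G)` and `G = ⟨a, b⟩`, then `|G/Z(G)| ≤ p²`. A proper subgroup `K`
satisfies `KZ(G) ≠ G`, so its image in `G/Z(G)` is proper, of order at most `p`, hence cyclic;
a group that is cyclic modulo a central subgroup is abelian.
-/

open Subgroup

theorem le_frattini_iff {G : Type*} [Group G] {H : Subgroup G} :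
    H ≤ frattini G ↔ ∀ M : Subgroup G, IsCoatom M → H ≤ M := by
  simp [frattini, Order.radical]

theorem mem_frattini_iff {G : Type*} [Group G] {x : G} :
    x ∈ frattini G ↔ ∀ M : Subgroup G, IsCoatom M → x ∈ M := by
  simp [frattini, Order.radical, mem_iInf]

namespace IsPGroup

variable {p : ℕ} [Fact p.Prime] {G : Type*} [Group G] [Finite G]

theorem normal_of_isCoatom_s10 (hG : IsPGroup p G) {M : Subgroup G} (hM : IsCoatom M) : M.Normal :=
  have := hG.isNilpotent
  Group.normalizerCondition_of_isNilpotent.normal_of_coatom M hM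

theorem index_eq_of_isCoatom_s10 (hG : IsPGroup p G) {M : Subgroup G} (hM : IsCoatom M) :
    M.index = p := by
  have hp : p.Prime := Fact.out
  obtain ⟨n, hn⟩ := IsPGroup.iff_card.mp (hG.to_subgroup M)
  obtain ⟨m, hm⟩ := IsPGroup.iff_card.mp hG
  have hnm : n < m := by
    rw [← Nat.pow_lt_pow_iff_right hp.one_lt, ← hn, ← hm]
    exact M.card_le_card_group.lt_of_ne fun h => hM.1 ((card_eq_iff_eq_top M).mp h)
  obtain ⟨K, hK, hMK⟩ := Sylow.exists_subgroup_card_pow_succ (hm ▸ pow_dvd_pow p hnm) hn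
  have hKtop : K = ⊤ := hM.2 K <| hMK.lt_of_ne fun h => by
    subst h
    rw [hn] at hK
    exact n.succ_ne_self (Nat.pow_right_injective hp.two_le hK).symm
  have hcard := M.card_mul_index
  rw [hn, ← card_top (G := G), ← hKtop, hK, pow_succ] at hcard
  exact Nat.eq_of_mul_eq_mul_left (pow_pos hp.pos n) hcard

theorem pow_mem_frattini (hG : IsPGroup p G) (g : G) : g ^ p ∈ frattini G := by
  rw [mem_frattini_iff]
  intro M hM
  have := hG.normal_of_isCoatom_s10 hM
  simpa only [hG.index_eq_of_isCoatom_s10 hM] using M.pow_index_mem g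

theorem commutator_le_frattini (hG : IsPGroup p G) : commutator G ≤ frattini G := by
  rw [le_frattini_iff]
  intro M hM
  have := hG.normal_of_isCoatom_s10 hM
  have : IsCyclic (G ⧸ M) :=
    isCyclic_of_prime_card (by rw [← M.index_eq_card, hG.index_eq_of_isCoatom_s10 hM])
  exact Subgroup.Normal.quotient_commutative_iff_commutator_le.mp inferInstance

theorem isCyclic_of_ne_top_of_card_le_sq (hG : IsPGroup p G) (hcard : Nat.card G ≤ p ^ 2)
    {R : Subgroup G} (hR : R ≠ ⊤) : IsCyclic R := by
  have hp : p.Prime := Fact.out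
  obtain ⟨j, hj⟩ := IsPGroup.iff_card.mp (hG.to_subgroup R)
  have hlt : p ^ j < p ^ 2 :=
    hj ▸ (R.card_le_card_group.lt_of_ne fun h => hR ((card_eq_iff_eq_top R).mp h)).trans_le hcard
  have hj1 : j ≤ 1 := by
    have := (Nat.pow_lt_pow_iff_right hp.one_lt).mp hlt
    omega
  exact isCyclic_of_card_dvd_prime (hj ▸ (pow_dvd_pow p hj1).trans (pow_one p).dvd)

end IsPGroup

theorem card_le_orderOf_mul_orderOf_of_closure_pair_eq_top {G : Type*} [Group G] [Finite G]
    {x y : G} (hxy : Commute x y) (hgen : closure {x, y} = ⊤) :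
    Nat.card G ≤ orderOf x * orderOf y := by
  let f := MonoidHom.noncommCoprod (zpowers x).subtype (zpowers y).subtype <| by
    rintro ⟨_, i, rfl⟩ ⟨_, j, rfl⟩
    exact hxy.zpow_zpow i j
  have hf : Function.Surjective f := by
    rw [← MonoidHom.range_eq_top, MonoidHom.noncommCoprod_range, range_subtype, range_subtype,
      ← hgen, Set.insert_eq, Subgroup.closure_union, zpowers_eq_closure, zpowers_eq_closure]
  calc Nat.card G ≤ Nat.card (zpowers x × zpowers y) := Nat.card_le_card_of_surjective f hf
    _ = orderOf x * orderOf y := by rw [Nat.card_prod, Nat.card_zpowers, Nat.card_zpowers]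

theorem Subgroup.isMulCommutative_of_isCyclic_map_center {G : Type*} [Group G] (K : Subgroup G)
    [IsCyclic (K.map (QuotientGroup.mk' (center G)))] : IsMulCommutative K := by
  let f := (QuotientGroup.mk' (center G)).comp K.subtype
  have : IsCyclic f.range := by rwa [MonoidHom.range_comp, range_subtype]
  refine f.rangeRestrict.isMulCommutative_of_isCyclic_of_ker_le_center fun k hk => ?_
  rw [MonoidHom.ker_rangeRestrict, MonoidHom.mem_ker] at hk
  rw [mem_center_iff]
  exact fun g => Subtype.ext (mem_center_iff.mp ((QuotientGroup.eq_one_iff _).mp hk) g)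

theorem IsPGroup.isMulCommutative_of_ne_top_of_center_eq_frattini {p : ℕ} [Fact p.Prime]
    {G : Type*} [Group G] [Finite G] (hG : IsPGroup p G) {a b : G}
    (hgen : closure {a, b} = ⊤) (hZ : center G = frattini G) {K : Subgroup G} (hK : K ≠ ⊤) :
    IsMulCommutative K := by
  have hp : p.Prime := Fact.out
  let π := QuotientGroup.mk' (center G)
  have hpow (g : G) : π g ^ p = 1 := by
    rw [← map_pow, QuotientGroup.mk'_apply, QuotientGroup.eq_one_iff, hZ]
    exact hG.pow_mem_frattini g
  have : IsMulCommutative (G ⧸ center G) :=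
    Subgroup.Normal.quotient_commutative_iff_commutator_le.mpr (hZ ▸ hG.commutator_le_frattini)
  have hgenQ : closure {π a, π b} = ⊤ := by
    rw [← Set.image_pair, ← MonoidHom.map_closure, hgen,
      map_top_of_surjective π (QuotientGroup.mk'_surjective _)]
  have hcard : Nat.card (G ⧸ center G) ≤ p ^ 2 := calc
    _ ≤ orderOf (π a) * orderOf (π b) :=
      card_le_orderOf_mul_orderOf_of_closure_pair_eq_top (mul_comm' _ _) hgenQ
    _ ≤ p ^ 2 := by
      rw [sq]
      exact Nat.mul_le_mul (orderOf_le_of_pow_eq_one hp.pos (hpow a))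
        (orderOf_le_of_pow_eq_one hp.pos (hpow b))
  have hKQ : K.map π ≠ ⊤ := fun h => hK <| frattini_nongenerating <| by
    rw [← hZ, ← QuotientGroup.ker_mk' (center G), ← comap_map_eq, h, comap_top]
  have := (hG.to_quotient _).isCyclic_of_ne_top_of_card_le_sq hcard hKQ
  exact K.isMulCommutative_of_isCyclic_map_center

section ProperSubgroupsCommutative

variable {G : Type*} [Group G]

theorem exists_closure_pair_eq_top_of_forall_ne_top_isMulCommutative
    (hna : ¬IsMulCommutative G) (hmin : ∀ H : Subgroup G, H ≠ ⊤ → IsMulCommutative H) :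
    ∃ a b : G, closure {a, b} = ⊤ := by
  obtain ⟨a, b, hab⟩ : ∃ a b : G, a * b ≠ b * a := by
    simpa [isMulCommutative_iff] using hna
  refine ⟨a, b, by_contra fun h => hab ?_⟩
  have := hmin _ h
  exact setLike_mul_comm (subset_closure (Set.mem_insert a {b}))
    (subset_closure (Set.mem_insert_of_mem a rfl))

theorem center_le_frattini_of_forall_ne_top_isMulCommutative
    (hna : ¬IsMulCommutative G) (hmin : ∀ H : Subgroup G, H ≠ ⊤ → IsMulCommutative H) :
    center G ≤ frattini G := by
  intro z hz
  rw [mem_frattini_iff]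
  intro M hM
  by_contra hzM
  have htop : closure (M ∪ {z}) = ⊤ := hM.2 _ <| SetLike.lt_iff_le_and_exists.mpr
    ⟨fun x hx => subset_closure (Or.inl hx), z, subset_closure (Or.inr rfl), hzM⟩
  have := hmin M hM.1
  have hcomm : IsMulCommutative (closure (M ∪ {z} : Set G)) := by
    refine isMulCommutative_closure ?_
    rintro x (hx | rfl) y (hy | rfl)
    · exact setLike_mul_comm hx hy
    · exact mem_center_iff.mp hz x
    · exact (mem_center_iff.mp hz y).symm
    · rfl
  rw [htop] at hcomm
  exact hna ⟨⟨fun a b => setLike_mul_comm (mem_top a) (mem_top b)⟩⟩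

theorem frattini_le_center_of_forall_ne_top_isMulCommutative [Finite G]
    (hna : ¬IsMulCommutative G) (hmin : ∀ H : Subgroup G, H ≠ ⊤ → IsMulCommutative H) :
    frattini G ≤ center G := by
  intro x hx
  rw [mem_center_iff]
  intro g
  have hg : zpowers g ≠ ⊤ := fun h =>
    hna (isCyclic_iff_exists_zpowers_eq_top.mpr ⟨g, h⟩).isMulCommutative
  have := hmin _ fun h => hg (frattini_nongenerating h)
  exact setLike_mul_comm (mem_sup_left (mem_zpowers g)) (mem_sup_right hx)

end ProperSubgroupsCommutative

/-- A finite non-abelian p-group is minimal non-abelian iff d(G) = 2 and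
Z(G) = Φ(G). -/
theorem minimal_nonabelian_iff_two_gen_center_eq_frattini {p : ℕ} (hp : p.Prime)
    (G : Type*) [Group G] [Finite G] (hG : IsPGroup p G)
    (hna : ¬∀ a b : G, a * b = b * a) :
    (∀ H : Subgroup G, H ≠ ⊤ → IsMulCommutative H) ↔
      ((∃ a b : G, Subgroup.closure {a, b} = ⊤) ∧ Subgroup.center G = frattini G) := by
  have := Fact.mk hp
  rw [← isMulCommutative_iff] at hna
  constructor
  · intro hmin
    exact ⟨exists_closure_pair_eq_top_of_forall_ne_top_isMulCommutative hna hmin,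
      (center_le_frattini_of_forall_ne_top_isMulCommutative hna hmin).antisymm
        (frattini_le_center_of_forall_ne_top_isMulCommutative hna hmin)⟩
  · rintro ⟨⟨a, b, hgen⟩, hZ⟩ K hK
    exact hG.isMulCommutative_of_ne_top_of_center_eq_frattini hgen hZ hK
end
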